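/- arXiv:2111.06711 — 2 statements merged into one kernel-verified Lean document; each statement's English description precedes it below -/
import Mathlib

section
/- Suppose an extended aggregation function agg: ⋃_n [0,1]ⁿ → [0,1] satisfies: agg is the identity on [0,1]; agg is invariant under permutations of its arguments (AAT); removing a zero entry leaves the value unchanged (NE0); agg equals 1 whenever some entry equals 1 (AN1); and for each n, each fixed vector and index, agg is an affine function of the remaining free coordinate (LIN). Then agg satisfies the recursion agg(r₁,…,rₙ,r_{n+1}) = agg(r₁,…,rₙ) + r_{n+1}·(1 - agg(r₁,…,rₙ)) for all r ∈ [0,1]^{n+1}. -/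
/-- An extended aggregation function on finite tuples from `[0,1]`:
nondecreasing in each entry, with infimum 0 and supremum 1 on each `[0,1]ⁿ`
(for `n ≥ 1`), and the identity on singletons. -/
structure ExtAgg where
  agg : (n : ℕ) → (Fin n → ℝ) → ℝ
  mem_Icc : ∀ n (x : Fin n → ℝ), (∀ i, x i ∈ Set.Icc (0:ℝ) 1) →
    agg n x ∈ Set.Icc (0:ℝ) 1
  mono : ∀ n (x y : Fin n → ℝ), (∀ i, x i ∈ Set.Icc (0:ℝ) 1) →
    (∀ i, y i ∈ Set.Icc (0:ℝ) 1) → (∀ i, x i ≤ y i) → agg n x ≤ agg n y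
  inf_eq : ∀ n, 1 ≤ n →
    sInf (Set.image (agg n) {x | ∀ i, x i ∈ Set.Icc (0:ℝ) 1}) = 0
  sup_eq : ∀ n, 1 ≤ n →
    sSup (Set.image (agg n) {x | ∀ i, x i ∈ Set.Icc (0:ℝ) 1}) = 1
  id_one : ∀ x : Fin 1 → ℝ, x 0 ∈ Set.Icc (0:ℝ) 1 → agg 1 x = x 0

/-- (LIN): for each fixed vector and index, `agg` is affine in the remaining free coordinate. -/
def LIN (A : ExtAgg) : Prop :=
  ∀ n (r : Fin n → ℝ), (∀ i, r i ∈ Set.Icc (0:ℝ) 1) → ∀ i : Fin n,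
    ∃ a b : ℝ, ∀ x ∈ Set.Icc (0:ℝ) 1,
      A.agg n (Function.update r i x) = b + a * x

/-- (AAT): invariance under permutations of the arguments. -/
def AAT (A : ExtAgg) : Prop :=
  ∀ n (x : Fin n → ℝ), (∀ i, x i ∈ Set.Icc (0:ℝ) 1) →
    ∀ π : Equiv.Perm (Fin n), A.agg n x = A.agg n (x ∘ π)

/-- (NE0): a zero entry may be deleted without changing the value. -/
def NE0 (A : ExtAgg) : Prop :=
  ∀ n (x : Fin (n + 1) → ℝ), (∀ i, x i ∈ Set.Icc (0:ℝ) 1) →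
    ∀ i : Fin (n + 1), x i = 0 → A.agg (n + 1) x = A.agg n (x ∘ i.succAbove)

/-- (AN1): if some entry equals `1` then the value is `1`. -/
def AN1 (A : ExtAgg) : Prop :=
  ∀ n (x : Fin n → ℝ), (∀ i, x i ∈ Set.Icc (0:ℝ) 1) →
    (∃ i, x i = 1) → A.agg n x = 1

/-- Any extended aggregation function satisfying (LIN), (AAT), (NE0) and (AN1)
satisfies the recursion `agg(r₁,…,rₙ,r_{n+1}) = agg(r₁,…,rₙ) + r_{n+1}·(1 - agg(r₁,…,rₙ))`. -/
theorem extAgg_recursion (A : ExtAgg) (hLIN : LIN A) (hAAT : AAT A)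
    (hNE0 : NE0 A) (hAN1 : AN1 A) (n : ℕ) (hn : 1 ≤ n)
    (r : Fin (n + 1) → ℝ) (hr : ∀ i, r i ∈ Set.Icc (0:ℝ) 1) :
    A.agg (n + 1) r =
      A.agg n (Fin.init r) + r (Fin.last n) * (1 - A.agg n (Fin.init r)) := by
  obtain ⟨a, b, hab⟩ := hLIN (n + 1) r hr (Fin.last n)
  have hmem : ∀ c : ℝ, c ∈ Set.Icc (0:ℝ) 1 →
      ∀ i, Function.update r (Fin.last n) c i ∈ Set.Icc (0:ℝ) 1 := by
    intro c hc i
    rcases eq_or_ne i (Fin.last n) with h | h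
    · subst h; simpa using hc
    · simp [Function.update_of_ne h, hr i]
  have h0 : A.agg (n + 1) (Function.update r (Fin.last n) 0) = b := by
    have := hab 0 (by norm_num)
    simpa using this
  have h1 : A.agg (n + 1) (Function.update r (Fin.last n) 1) = b + a := by
    have := hab 1 (by norm_num)
    simpa using this
  have hAN : A.agg (n + 1) (Function.update r (Fin.last n) 1) = 1 :=
    hAN1 (n + 1) _ (hmem 1 (by norm_num)) ⟨Fin.last n, by simp⟩
  have hNE : A.agg (n + 1) (Function.update r (Fin.last n) 0)
      = A.agg n (Fin.init r) := by
    have h := hNE0 n (Function.update r (Fin.last n) 0) (hmem 0 (by norm_num))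
      (Fin.last n) (by simp)
    rw [h]
    congr 1
    funext i
    simp [Fin.init, Fin.succAbove, Function.update_of_ne (Fin.castSucc_lt_last i).ne]
  have hr' : A.agg (n + 1) r = b + a * r (Fin.last n) := by
    have := hab (r (Fin.last n)) (hr (Fin.last n))
    rwa [Function.update_eq_self] at this
  have hb : b = A.agg n (Fin.init r) := by rw [← h0, hNE]
  have ha : a = 1 - b := by linarith [h1.symm.trans hAN]
  rw [hr', ha, hb]
  ring
end

section
/- In the coordination game where agent j faces two indistinguishable nodes v₁ ∼ v₂ with actions {left, right}, such that at v₁ the action 'right' and at v₂ the action 'left' certainly lead to the undesirable outcome while the respective other actions certainly avoid it: any outcome responsibility assignment R that satisfies (KSym) at the member level and (FMC) must assign R(w, j) = 1 for all four outcomes w, and hence agent j has no strategy guaranteeing responsibility 0; thus no responsibility function satisfies (KSym), (FMC), and (NUR) simultaneously. Formally: there is no function R: {w₁,w₂,w₃,w₄} → [0,1] such that R(w₂) = R(w₃) = 1 (by FMC), R(w₁) = R(w₂) and R(w₃) = R(w₄) are forced by symmetry of knowledge (KSym), and some available strategy of j (choosing left at the information set, reaching {w₁, w₃}, or choosing right,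 reaching {w₂, w₄}) yields responsibility 0 at all reachable outcomes (NUR). -/
/-- In the coordination game with outcomes `w₁, w₂, w₃, w₄` (indexed `0,…,3`),
no outcome responsibility function for agent `j` can simultaneously satisfy
(FMC) (`R w₂ = R w₃ = 1`), (KSym) (`R w₁ = R w₂` and `R w₃ = R w₄`), and
(NUR) (some uniform strategy of `j` — left, reaching `{w₁, w₃}`, or right,
reaching `{w₂, w₄}` — yields responsibility `0` at all reachable outcomes). -/
theorem no_ksym_fmc_nur :
    ¬ ∃ R : Fin 4 → ℝ,
      (∀ w, R w ∈ Set.Icc (0:ℝ) 1) ∧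
      R 1 = 1 ∧ R 2 = 1 ∧
      R 0 = R 1 ∧ R 2 = R 3 ∧
      ((R 0 = 0 ∧ R 2 = 0) ∨ (R 1 = 0 ∧ R 3 = 0)) := by
  rintro ⟨R, _, h1, h2, h01, h23, (⟨ha, hb⟩ | ⟨ha, hb⟩)⟩ <;> simp_all
end
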